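/- Define s_k¹ by exp(-Σ_{j≥1} s_j¹ z^j) = Σ_{k≥0} (2k+1)!! (Σ_{j=0}^k 1/(2j+1)) (z u²)^k. Then s_1¹ = -4u², s_2¹ = -15u⁴, and s_3¹ = -(316/3)u⁶. -/

import Mathlib

open PowerSeries

/-!
The formal logarithm of `1 + a₁ z + a₂ z² + a₃ z³ + ⋯` begins
`a₁ z + (a₂ - a₁²/2) z² + (a₃ - a₁a₂ + a₁³/3) z³`, and for `D1ser u` the coefficients are
`a₁ = 3·(4/3) u² = 4u²`, `a₂ = 15·(23/15) u⁴ = 23u⁴`, `a₃ = 105·(176/105) u⁶ = 176u⁶`.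
-/

/-- Formal termwise integration. -/
noncomputable def pint (f : PowerSeries ℂ) : PowerSeries ℂ :=
  PowerSeries.mk fun n => if n = 0 then 0 else coeff (n-1) f / n

/-- The series `Σ_{k≥0} (2k+1)!! (Σ_{j=0}^k 1/(2j+1)) (z u²)^k`
(constant term `1`). -/
noncomputable def D1ser (u : ℂ) : PowerSeries ℂ :=
  PowerSeries.mk fun n =>
    (Nat.doubleFactorial (2*n + 1) : ℂ)
      * (∑ j ∈ Finset.range (n+1), (1 : ℂ)/(2*j+1)) * u^(2*n)

noncomputable def flog (f : PowerSeries ℂ) : PowerSeries ℂ :=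
  pint (d⁄dX ℂ f * f⁻¹)

theorem coeff_pint_succ (f : PowerSeries ℂ) (n : ℕ) :
    coeff (n + 1) (pint f) = coeff n f / (n + 1) := by
  simp [pint]

section Inverse

variable {k : Type*} [Field k] {f : PowerSeries k}

theorem coeff_zero_inv_of_constantCoeff_eq_one (hf : constantCoeff f = 1) :
    coeff 0 f⁻¹ = 1 := by
  simp [hf]

theorem coeff_one_inv_of_constantCoeff_eq_one (hf : constantCoeff f = 1) :
    coeff 1 f⁻¹ = -coeff 1 f := by
  rw [coeff_inv, Finset.Nat.sum_antidiagonal_eq_sum_range_succ_mk]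
  simp [Finset.sum_range_succ, hf]

theorem coeff_two_inv_of_constantCoeff_eq_one (hf : constantCoeff f = 1) :
    coeff 2 f⁻¹ = coeff 1 f ^ 2 - coeff 2 f := by
  rw [coeff_inv, Finset.Nat.sum_antidiagonal_eq_sum_range_succ_mk]
  simp [Finset.sum_range_succ, hf, coeff_one_inv_of_constantCoeff_eq_one hf]
  ring

end Inverse

theorem coeff_flog_of_constantCoeff_eq_one {f : PowerSeries ℂ} (hf : constantCoeff f = 1) :
    coeff 1 (flog f) = coeff 1 f ∧
    coeff 2 (flog f) = coeff 2 f - coeff 1 f ^ 2 / 2 ∧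
    coeff 3 (flog f) = coeff 3 f - coeff 1 f * coeff 2 f + coeff 1 f ^ 3 / 3 := by
  refine ⟨?_, ?_, ?_⟩ <;>
  · simp only [flog, coeff_pint_succ, coeff_mul, Finset.Nat.sum_antidiagonal_eq_sum_range_succ_mk,
      Finset.sum_range_succ, Finset.sum_range_zero, coeff_derivative,
      coeff_zero_inv_of_constantCoeff_eq_one hf, coeff_one_inv_of_constantCoeff_eq_one hf,
      coeff_two_inv_of_constantCoeff_eq_one hf]
    push_cast
    ring

theorem coeff_D1ser_le_three (u : ℂ) :
    constantCoeff (D1ser u) = 1 ∧ coeff 1 (D1ser u) = 4 * u ^ 2 ∧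
    coeff 2 (D1ser u) = 23 * u ^ 4 ∧ coeff 3 (D1ser u) = 176 * u ^ 6 := by
  refine ⟨?_, ?_, ?_, ?_⟩ <;>
    simp [D1ser, Finset.sum_range_succ, Nat.doubleFactorial] <;>
    norm_num

/-- `s_k¹` defined by
`exp(-Σ_{j≥1} s_j¹ z^j) = Σ_{k≥0} (2k+1)!! (Σ_{j=0}^k 1/(2j+1)) (z u²)^k`,
i.e. `Σ_{j≥1} s_j¹ z^j = -log(RHS)`, where the formal logarithm of a series
`D` with constant term 1 is `log D = ∫₀^z D'/D`.
Then `s₁¹ = -4u²`, `s₂¹ = -15u⁴`, `s₃¹ = -(316/3)u⁶`. -/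
theorem s1_values (u : ℂ) (s1 : ℕ → ℂ)
    (hs : ∀ k : ℕ, s1 k = -(coeff k (pint (d⁄dX ℂ (D1ser u) * (D1ser u)⁻¹)))) :
    s1 1 = -4 * u^2 ∧ s1 2 = -15 * u^4 ∧ s1 3 = -(316/3) * u^6 := by
  obtain ⟨hD0, hD1, hD2, hD3⟩ := coeff_D1ser_le_three u
  obtain ⟨hL1, hL2, hL3⟩ := coeff_flog_of_constantCoeff_eq_one hD0
  simp only [flog] at hL1 hL2 hL3
  refine ⟨?_, ?_, ?_⟩ <;>
  · simp only [hs, hL1, hL2, hL3, hD1, hD2, hD3]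
    ring
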